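/- Let V be a 2n-dimensional real vector space with 'bosonic' coordinates φ_i (i = 1,…,n) and 'fermionic' coordinates ψ_î (î = 1,…,n, odd). Consider N transformations δ_A (A = 1,…,N) acting by δ_A φ_i = -i ε (L_A)_i^ĵ ψ_ĵ and δ_A ψ_î = -ε (R_A)_î^j φ̇_j for real n×n matrices L_A, R_A. These transformations satisfy the N-extended supersymmetry algebra [δ^{ε₁}_A, δ^{ε₂}_B] = 2i ε₁ ε₂ δ_{AB} ∂_t on both φ and ψ if and only if L_A R_B + L_B R_A = -2 δ_{AB} 𝟙 and R_A L_B + R_B L_A = -2 δ_{AB} 𝟙 for all A, B. -/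
import Mathlib


noncomputable section
namespace GR
open Finsupp MvPolynomial
variable {n : ℕ}
abbrev Idx (n : ℕ) := (Fin n ⊕ Fin n) × ℕ
abbrev Cp (n : ℕ) := MvPolynomial (Idx n) ℂ
abbrev Mat (n : ℕ) := Matrix (Fin 2) (Fin 2) (Cp n)

/-- value on a monomial: `g s` if the monomial is the single variable `s`, else 0 -/
def onVar (g : Idx n → Cp n) (m : Idx n →₀ ℕ) : Cp n :=
  ∑ s ∈ m.support, if m = Finsupp.single s 1 then g s else 0

lemma onVar_single (g : Idx n → Cp n) (s : Idx n) :
    onVar g (Finsupp.single s 1) = g s := by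
  rw [onVar, Finsupp.support_single_ne_zero s one_ne_zero, Finset.sum_singleton, if_pos rfl]

lemma onVar_notVar (g : Idx n → Cp n) (m : Idx n →₀ ℕ) (h : ∀ s, m ≠ Finsupp.single s 1) :
    onVar g m = 0 := by
  rw [onVar]
  exact Finset.sum_eq_zero fun s _ => if_neg (h s)

def mkD (g : Idx n → Cp n) : Cp n →ₗ[ℂ] Cp n :=
  (MvPolynomial.basisMonomials (Idx n) ℂ).constr ℂ (onVar g)

lemma mkD_monomial (g : Idx n → Cp n) (m : Idx n →₀ ℕ) :
    mkD g (MvPolynomial.monomial m 1) = onVar g m := by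
  have : (MvPolynomial.monomial m (1:ℂ)) = (MvPolynomial.basisMonomials (Idx n) ℂ) m := by
    rw [MvPolynomial.coe_basisMonomials]
  rw [this, mkD, Module.Basis.constr_basis]

lemma mkD_X (g : Idx n → Cp n) (s : Idx n) : mkD g (X s) = g s := by
  rw [X, mkD_monomial, onVar_single]

def tgtD : Idx n → Cp n := fun s => X (s.1, s.2 + 1)

def tgtS (LM RM : Matrix (Fin n) (Fin n) ℝ) : Idx n → Cp n
  | (Sum.inl i, k) => -(Complex.I • ∑ j, (LM i j : ℂ) • X (Sum.inr j, k))
  | (Sum.inr i, k) => -(∑ j, (RM i j : ℂ) • X (Sum.inl j, k + 1))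

def dC : Cp n →ₗ[ℂ] Cp n := mkD tgtD
def sC (LM RM : Matrix (Fin n) (Fin n) ℝ) : Cp n →ₗ[ℂ] Cp n := mkD (tgtS LM RM)

@[simp] lemma dC_X (s : Idx n) : dC (X s) = X (s.1, s.2 + 1) := mkD_X _ _
@[simp] lemma sC_X (LM RM : Matrix (Fin n) (Fin n) ℝ) (s : Idx n) :
    sC LM RM (X s) = tgtS LM RM s := mkD_X _ _

lemma dC_sC (LM RM : Matrix (Fin n) (Fin n) ℝ) (c : Cp n) :
    dC (sC LM RM c) = sC LM RM (dC c) := by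
  have : dC.comp (sC LM RM) = (sC LM RM).comp dC := by
    apply (MvPolynomial.basisMonomials (Idx n) ℂ).ext
    intro m
    rw [MvPolynomial.coe_basisMonomials]
    simp only [LinearMap.comp_apply]
    by_cases h : ∃ s : Idx n, m = Finsupp.single s 1
    · obtain ⟨s, rfl⟩ := h
      rw [show (MvPolynomial.monomial (Finsupp.single s 1) (1:ℂ)) = X s from rfl]
      obtain ⟨s1, k⟩ := s
      cases s1 with
      | inl i => simp [tgtS, tgtD, map_neg, map_smul, map_sum]
      | inr i => simp [tgtS, tgtD, map_neg, map_smul, map_sum]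
    · push_neg at h
      rw [sC, dC, mkD_monomial, mkD_monomial, onVar_notVar _ _ h, onVar_notVar _ _ h,
        map_zero, map_zero]
  exact DFunLike.congr_fun this c

end GR

section MatLevel
namespace GR
open MvPolynomial
variable {n : ℕ}

def Sc : Cp n →ₗ[ℂ] Mat n where
  toFun c := Matrix.diagonal (fun _ => c)
  map_add' x y := by
    refine Matrix.ext fun i j => ?_
    by_cases h : i = j <;> simp [Matrix.diagonal_apply, h]
  map_smul' r x := by
    refine Matrix.ext fun i j => ?_
    by_cases h : i = j <;> simp [Matrix.diagonal_apply, h]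

def th1 : Mat n := !![1, 0; 0, -1]
def th2 : Mat n := !![0, 1; 1, 0]

lemma Sc_comm (c : Cp n) (M : Mat n) : Sc c * M = M * Sc c := by
  refine Matrix.ext fun i j => ?_
  simp [Sc, Matrix.diagonal_mul, Matrix.mul_diagonal, mul_comm]

lemma mapMatrix_Sc (f : Cp n →ₗ[ℂ] Cp n) (c : Cp n) :
    f.mapMatrix (Sc c) = Sc (f c) := by
  refine Matrix.ext fun i j => ?_
  by_cases h : i = j <;>
    simp [Sc, LinearMap.mapMatrix_apply, Matrix.map_apply, Matrix.diagonal_apply, h]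

lemma mapMatrix_mul_th1 (f : Cp n →ₗ[ℂ] Cp n) (M : Mat n) :
    f.mapMatrix (M * th1) = f.mapMatrix M * th1 := by
  refine Matrix.ext fun i j => ?_
  fin_cases i <;> fin_cases j <;>
    simp [th1, LinearMap.mapMatrix_apply, Matrix.map_apply, Matrix.mul_apply,
      Fin.sum_univ_two, mul_neg_one, map_neg]

lemma mapMatrix_mul_th2 (f : Cp n →ₗ[ℂ] Cp n) (M : Mat n) :
    f.mapMatrix (M * th2) = f.mapMatrix M * th2 := by
  refine Matrix.ext fun i j => ?_
  fin_cases i <;> fin_cases j <;>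
    simp [th2, LinearMap.mapMatrix_apply, Matrix.map_apply, Matrix.mul_apply,
      Fin.sum_univ_two]

lemma mapMatrix_th1_mul (f : Cp n →ₗ[ℂ] Cp n) (M : Mat n) :
    f.mapMatrix (th1 * M) = th1 * f.mapMatrix M := by
  refine Matrix.ext fun i j => ?_
  fin_cases i <;> fin_cases j <;>
    simp [th1, LinearMap.mapMatrix_apply, Matrix.map_apply, Matrix.mul_apply,
      Matrix.vecMul, dotProduct, Matrix.vecHead, Matrix.vecTail,
      Fin.sum_univ_two, neg_one_mul, map_neg]

lemma mapMatrix_th2_mul (f : Cp n →ₗ[ℂ] Cp n) (M : Mat n) :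
    f.mapMatrix (th2 * M) = th2 * f.mapMatrix M := by
  refine Matrix.ext fun i j => ?_
  fin_cases i <;> fin_cases j <;>
    simp [th2, LinearMap.mapMatrix_apply, Matrix.map_apply, Matrix.mul_apply,
      Matrix.vecMul, dotProduct, Matrix.vecHead, Matrix.vecTail,
      Fin.sum_univ_two]

lemma th_anticomm : (th1 : Mat n) * th2 = -(th2 * th1) := by
  refine Matrix.ext fun i j => ?_
  fin_cases i <;> fin_cases j <;>
    simp [th1, th2, Matrix.mul_apply, Fin.sum_univ_two]

def dM : Mat n →ₗ[ℂ] Mat n := LinearMap.mapMatrix (dC (n := n))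

def delM (t : Mat n) (LM RM : Matrix (Fin n) (Fin n) ℝ) : Mat n →ₗ[ℂ] Mat n :=
  (LinearMap.mulRight ℂ t).comp (LinearMap.mapMatrix (sC LM RM))

lemma delM_apply (t : Mat n) (LM RM : Matrix (Fin n) (Fin n) ℝ) (M : Mat n) :
    delM t LM RM M = (sC LM RM).mapMatrix M * t := rfl

lemma dM_apply (M : Mat n) : dM M = (dC (n := n)).mapMatrix M := rfl

end GR
end MatLevel

section Model
namespace GR
open MvPolynomial
variable {n : ℕ}

def XB (i : Fin n) : Cp n := X (Sum.inl i, 0)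
def YB (i : Fin n) : Cp n := X (Sum.inr i, 0)
def phiM (i : Fin n) : Mat n := Sc (XB i)
def psiM (i : Fin n) : Mat n := Sc (YB i)

lemma dM_phiM (j : Fin n) : dM (phiM j) = Sc (X (Sum.inl j, 1)) := by
  rw [phiM, dM_apply, mapMatrix_Sc, XB, dC_X]

lemma dM_psiM (j : Fin n) : dM (psiM j) = Sc (X (Sum.inr j, 1)) := by
  rw [psiM, dM_apply, mapMatrix_Sc, YB, dC_X]

lemma model_phi (t : Mat n) (LM RM : Matrix (Fin n) (Fin n) ℝ) (i : Fin n) :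
    delM t LM RM (phiM i) = -(Complex.I • (t * ∑ j, (LM i j : ℂ) • psiM j)) := by
  have hsum : Sc (∑ j, (LM i j : ℂ) • YB j) = ∑ j, (LM i j : ℂ) • psiM j := by
    rw [map_sum]; simp only [map_smul, psiM]
  rw [← hsum, ← Sc_comm, delM_apply, phiM, mapMatrix_Sc, XB, sC_X]
  rw [show tgtS LM RM (Sum.inl i, 0) = -(Complex.I • (∑ j, (LM i j : ℂ) • YB j)) from rfl]
  rw [map_neg, map_smul, neg_mul, smul_mul_assoc]

lemma model_psi (t : Mat n) (LM RM : Matrix (Fin n) (Fin n) ℝ) (i : Fin n) :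
    delM t LM RM (psiM i) = -(t * ∑ j, (RM i j : ℂ) • dM (phiM j)) := by
  have hsum : Sc (∑ j, (RM i j : ℂ) • X (Sum.inl j, 1)) = ∑ j, (RM i j : ℂ) • dM (phiM j) := by
    rw [map_sum]; simp only [map_smul, dM_phiM]
  rw [← hsum, ← Sc_comm, delM_apply, psiM, mapMatrix_Sc, YB, sC_X]
  rw [show tgtS LM RM (Sum.inr i, 0) = -(∑ j, (RM i j : ℂ) • X (Sum.inl j, 1)) from rfl]
  rw [map_neg, neg_mul]

lemma model_del1_eps2 (LM RM : Matrix (Fin n) (Fin n) ℝ) (x : Mat n) :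
    delM th1 LM RM (th2 * x) = th2 * delM th1 LM RM x := by
  rw [delM_apply, delM_apply, mapMatrix_th2_mul, mul_assoc]

lemma model_del2_eps1 (LM RM : Matrix (Fin n) (Fin n) ℝ) (x : Mat n) :
    delM th2 LM RM (th1 * x) = th1 * delM th2 LM RM x := by
  rw [delM_apply, delM_apply, mapMatrix_th1_mul, mul_assoc]

lemma mapDS (LM RM : Matrix (Fin n) (Fin n) ℝ) (x : Mat n) :
    (sC LM RM).mapMatrix ((dC (n := n)).mapMatrix x)
      = (dC (n := n)).mapMatrix ((sC LM RM).mapMatrix x) :=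
  Matrix.ext fun i j => (dC_sC LM RM (x i j)).symm

lemma model_del1_d (LM RM : Matrix (Fin n) (Fin n) ℝ) (x : Mat n) :
    delM th1 LM RM (dM x) = dM (delM th1 LM RM x) := by
  rw [delM_apply, delM_apply, dM_apply, dM_apply, mapMatrix_mul_th1, mapDS]

lemma model_del2_d (LM RM : Matrix (Fin n) (Fin n) ℝ) (x : Mat n) :
    delM th2 LM RM (dM x) = dM (delM th2 LM RM x) := by
  rw [delM_apply, delM_apply, dM_apply, dM_apply, mapMatrix_mul_th2, mapDS]

lemma model_d_eps1 (x : Mat n) : dM (th1 * x) = th1 * dM x := by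
  rw [dM_apply, dM_apply, mapMatrix_th1_mul]

lemma model_d_eps2 (x : Mat n) : dM (th2 * x) = th2 * dM x := by
  rw [dM_apply, dM_apply, mapMatrix_th2_mul]

end GR
end Model

section Abstract
namespace GR
variable {n : ℕ} {A : Type} [Ring A] [Algebra ℂ A]

lemma rearrange (ε : A) (c : Fin n → ℂ) (r : Fin n → Fin n → ℂ) (y : Fin n → A) :
    ∑ j, c j • (ε * ∑ k, r j k • y k) = ε * ∑ k, (∑ j, c j * r j k) • y k := by
  simp only [Finset.mul_sum, mul_smul_comm, Finset.smul_sum, smul_smul, Finset.sum_smul]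
  exact Finset.sum_comm

lemma stage (D : A →ₗ[ℂ] A) (ε' ε : A) (c : Fin n → ℂ)
    (r : Fin n → Fin n → ℂ) (u v : Fin n → A)
    (hu : ∀ j, D (u j) = -(ε * ∑ k, r j k • v k))
    (hD : ∀ x, D (ε' * x) = ε' * D x) :
    D (-(Complex.I • (ε' * ∑ j, c j • u j)))
      = Complex.I • (ε' * (ε * ∑ k, (∑ j, c j * r j k) • v k)) := by
  rw [map_neg, map_smul, hD, map_sum]
  simp only [map_smul, hu, smul_neg]
  rw [Finset.sum_neg_distrib, mul_neg, smul_neg, neg_neg, rearrange]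

lemma stage' (D : A →ₗ[ℂ] A) (ε' ε : A) (c : Fin n → ℂ)
    (r : Fin n → Fin n → ℂ) (u v : Fin n → A)
    (hu : ∀ j, D (u j) = -(Complex.I • (ε * ∑ k, r j k • v k)))
    (hD : ∀ x, D (ε' * x) = ε' * D x) :
    D (-(ε' * ∑ j, c j • u j))
      = Complex.I • (ε' * (ε * ∑ k, (∑ j, c j * r j k) • v k)) := by
  rw [map_neg, hD, map_sum]
  simp only [map_smul, hu, smul_neg]
  rw [Finset.sum_neg_distrib, mul_neg, neg_neg]
  have h1 : ∀ j : Fin n, c j • (Complex.I • (ε * ∑ k, r j k • v k))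
      = Complex.I • (c j • (ε * ∑ k, r j k • v k)) := fun j => smul_comm _ _ _
  simp only [h1, ← Finset.smul_sum, mul_smul_comm, rearrange]

lemma combine (ε1 ε2 : A) (hεε : ε1 * ε2 = -(ε2 * ε1))
    (c1 c2 : Fin n → ℂ) (y : Fin n → A) (i : Fin n) {p : Prop} [Decidable p]
    (hc : ∀ k, c1 k + c2 k = if p then (if i = k then -2 else 0) else 0) :
    Complex.I • (ε2 * (ε1 * ∑ k, c1 k • y k)) - Complex.I • (ε1 * (ε2 * ∑ k, c2 k • y k))
      = if p then (2 * Complex.I) • (ε1 * ε2 * y i) else 0 := by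
  have h21 : ε2 * ε1 = -(ε1 * ε2) := by rw [hεε, neg_neg]
  rw [← mul_assoc, ← mul_assoc, h21, neg_mul, smul_neg, sub_eq_add_neg, ← neg_add, ← smul_add, ← mul_add,
    ← Finset.sum_add_distrib]
  have : ∀ k ∈ Finset.univ, (c1 k • y k + c2 k • y k)
      = ((if p then (if i = k then (-2 : ℂ) else 0) else 0) • y k) := by
    intro k _
    rw [← add_smul, hc k]
  rw [Finset.sum_congr rfl this]
  by_cases hp : p
  · simp only [hp, if_true, ite_smul, zero_smul, Finset.sum_ite_eq, Finset.mem_univ, if_true]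
    rw [mul_smul_comm, smul_smul]
    norm_num
    rw [mul_comm]
  · simp [hp]

end GR
end Abstract
-- extraction part, to be appended after testing
section Extract
namespace GR
open MvPolynomial
variable {n : ℕ}

lemma delM_Sc (t : Mat n) (LM RM : Matrix (Fin n) (Fin n) ℝ) (c : Cp n) :
    delM t LM RM (Sc c) = Sc (sC LM RM c) * t := by
  rw [delM_apply, mapMatrix_Sc]

lemma del1_del2_Sc (La Ra Lb Rb : Matrix (Fin n) (Fin n) ℝ) (c : Cp n) :
    delM th1 La Ra (delM th2 Lb Rb (Sc c)) = Sc (sC La Ra (sC Lb Rb c)) * th2 * th1 := by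
  rw [delM_Sc, delM_apply, mapMatrix_mul_th2, mapMatrix_Sc]

lemma del2_del1_Sc (La Ra Lb Rb : Matrix (Fin n) (Fin n) ℝ) (c : Cp n) :
    delM th2 Lb Rb (delM th1 La Ra (Sc c)) = Sc (sC Lb Rb (sC La Ra c)) * th1 * th2 := by
  rw [delM_Sc, delM_apply, mapMatrix_mul_th1, mapMatrix_Sc]

lemma ss_X_inl (La Ra Lb Rb : Matrix (Fin n) (Fin n) ℝ) (i : Fin n) :
    sC La Ra (sC Lb Rb (X (Sum.inl i, 0)))
      = Complex.I • ∑ j, ∑ k, ((Lb i j : ℂ) * (Ra j k : ℂ)) • X (Sum.inl k, 1) := by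
  rw [sC_X]
  show sC La Ra (-(Complex.I • ∑ j, (Lb i j : ℂ) • X (Sum.inr j, 0))) = _
  rw [map_neg, map_smul, map_sum]
  simp only [map_smul, sC_X]
  show -(Complex.I • ∑ j, (Lb i j : ℂ) • -(∑ k, (Ra j k : ℂ) • X (Sum.inl k, 0 + 1))) = _
  simp only [smul_neg, Finset.sum_neg_distrib, neg_neg, Finset.smul_sum, smul_smul, zero_add]

lemma ss_X_inr (La Ra Lb Rb : Matrix (Fin n) (Fin n) ℝ) (i : Fin n) :
    sC La Ra (sC Lb Rb (X (Sum.inr i, 0)))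
      = Complex.I • ∑ j, ∑ k, ((Rb i j : ℂ) * (La j k : ℂ)) • X (Sum.inr k, 1) := by
  rw [sC_X]
  show sC La Ra (-(∑ j, (Rb i j : ℂ) • X (Sum.inl j, 0 + 1))) = _
  rw [map_neg, map_sum]
  simp only [map_smul, sC_X]
  show -(∑ j, (Rb i j : ℂ) • -(Complex.I • ∑ k, (La j k : ℂ) • X (Sum.inr k, 1))) = _
  simp only [smul_neg, Finset.sum_neg_distrib, neg_neg, Finset.smul_sum, smul_smul]
  refine Finset.sum_congr rfl fun j _ => Finset.sum_congr rfl fun k _ => ?_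
  congr 1
  ring

lemma entry1 (w : Cp n) : ((Sc w * th2 * th1 : Mat n) 0 1) = -w := by
  simp [Sc, th1, th2, Matrix.mul_apply, Fin.sum_univ_two, Matrix.diagonal_apply]

lemma entry2 (w : Cp n) : ((Sc w * th1 * th2 : Mat n) 0 1) = w := by
  simp [Sc, th1, th2, Matrix.mul_apply, Fin.sum_univ_two, Matrix.diagonal_apply]

lemma entry3 (w : Cp n) : (((2 * Complex.I) • (th1 * th2 * Sc w) : Mat n) 0 1) = (2 * Complex.I) • w := by
  simp [Sc, th1, th2, Matrix.mul_apply, Fin.sum_univ_two, Matrix.diagonal_apply]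

end GR
end Extract
section Extract2
namespace GR
open MvPolynomial
variable {n : ℕ}

lemma extract_phi (La Ra Lb Rb : Matrix (Fin n) (Fin n) ℝ) {p : Prop} [Decidable p]
    (E : ∀ i : Fin n, delM th1 La Ra (delM th2 Lb Rb (phiM i))
        - delM th2 Lb Rb (delM th1 La Ra (phiM i))
        = if p then (2 * Complex.I) • (th1 * th2 * dM (phiM i)) else 0) :
    La * Rb + Lb * Ra = if p then -(2:ℝ) • (1 : Matrix (Fin n) (Fin n) ℝ) else 0 := by
  refine Matrix.ext fun i k0 => ?_
  have E' := E i
  have h12 : delM th1 La Ra (delM th2 Lb Rb (phiM i))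
      = Sc (Complex.I • ∑ j, ∑ k, ((Lb i j : ℂ) * (Ra j k : ℂ)) • X (Sum.inl k, 1)) * th2 * th1 := by
    rw [phiM, del1_del2_Sc, XB, ss_X_inl]
  have h21 : delM th2 Lb Rb (delM th1 La Ra (phiM i))
      = Sc (Complex.I • ∑ j, ∑ k, ((La i j : ℂ) * (Rb j k : ℂ)) • X (Sum.inl k, 1)) * th1 * th2 := by
    rw [phiM, del2_del1_Sc, XB, ss_X_inl]
  rw [h12, h21, dM_phiM] at E'
  have E01 := Matrix.ext_iff.mpr E' 0 1
  rw [Matrix.sub_apply, entry1, entry2] at E01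
  by_cases hp : p
  · simp only [hp, if_true] at E01 ⊢
    rw [entry3] at E01
    have EC := congrArg (MvPolynomial.lcoeff ℂ (Finsupp.single ((Sum.inl k0 : Fin n ⊕ Fin n), (1:ℕ)) (1:ℕ))) E01
    simp only [map_neg, map_sub, map_smul, map_sum, lcoeff_apply, coeff_X', smul_eq_mul,
      Finset.mul_sum, Finsupp.single_left_inj (one_ne_zero (α := ℕ)), Prod.mk.injEq, Sum.inl.injEq,
      mul_ite, mul_zero, mul_one, and_true, Finset.sum_ite_eq', Finset.mem_univ, if_true] at EC
    rw [← Finset.mul_sum, ← Finset.mul_sum] at EC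
    rw [Matrix.add_apply, Matrix.mul_apply, Matrix.mul_apply, Matrix.smul_apply, Matrix.one_apply]
    have key : ((∑ j, La i j * Rb j k0) + (∑ j, Lb i j * Ra j k0) : ℝ) = if i = k0 then -2 else 0 := by
      have hC : (((∑ j, La i j * Rb j k0) + (∑ j, Lb i j * Ra j k0) : ℝ) : ℂ)
          = if i = k0 then -2 else 0 := by
        push_cast
        by_cases hik : i = k0
        · subst hik
          simp only [if_true] at EC ⊢
          linear_combination Complex.I * EC +
            ((∑ j, (La i j : ℂ) * (Rb j i : ℂ)) + (∑ j, (Lb i j : ℂ) * (Ra j i : ℂ)) + 2) *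
              Complex.I_mul_I
        · simp only [hik, if_false] at EC ⊢
          linear_combination Complex.I * EC +
            ((∑ j, (La i j : ℂ) * (Rb j k0 : ℂ)) + (∑ j, (Lb i j : ℂ) * (Ra j k0 : ℂ))) *
              Complex.I_mul_I
      by_cases hik : i = k0
      · simp only [hik, if_true] at hC ⊢; exact_mod_cast hC
      · simp only [hik, if_false] at hC ⊢; exact_mod_cast hC
    rw [key]
    by_cases hik : i = k0 <;> simp [hik]
  · simp only [hp, if_false, Matrix.zero_apply] at E01 ⊢
    have EC := congrArg (MvPolynomial.lcoeff ℂ (Finsupp.single ((Sum.inl k0 : Fin n ⊕ Fin n), (1:ℕ)) (1:ℕ))) E01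
    simp only [map_neg, map_sub, map_smul, map_sum, lcoeff_apply, coeff_X', smul_eq_mul,
      Finset.mul_sum, Finsupp.single_left_inj (one_ne_zero (α := ℕ)), Prod.mk.injEq, Sum.inl.injEq,
      mul_ite, mul_zero, mul_one, and_true, Finset.sum_ite_eq', Finset.mem_univ, if_true,
      map_zero] at EC
    rw [← Finset.mul_sum, ← Finset.mul_sum] at EC
    rw [Matrix.add_apply, Matrix.mul_apply, Matrix.mul_apply]
    have hC : (((∑ j, La i j * Rb j k0) + (∑ j, Lb i j * Ra j k0) : ℝ) : ℂ) = 0 := by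
      push_cast
      linear_combination Complex.I * EC +
        ((∑ j, (La i j : ℂ) * (Rb j k0 : ℂ)) + (∑ j, (Lb i j : ℂ) * (Ra j k0 : ℂ))) *
          Complex.I_mul_I
    exact_mod_cast hC

lemma extract_psi (La Ra Lb Rb : Matrix (Fin n) (Fin n) ℝ) {p : Prop} [Decidable p]
    (E : ∀ i : Fin n, delM th1 La Ra (delM th2 Lb Rb (psiM i))
        - delM th2 Lb Rb (delM th1 La Ra (psiM i))
        = if p then (2 * Complex.I) • (th1 * th2 * dM (psiM i)) else 0) :
    Ra * Lb + Rb * La = if p then -(2:ℝ) • (1 : Matrix (Fin n) (Fin n) ℝ) else 0 := by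
  refine Matrix.ext fun i k0 => ?_
  have E' := E i
  have h12 : delM th1 La Ra (delM th2 Lb Rb (psiM i))
      = Sc (Complex.I • ∑ j, ∑ k, ((Rb i j : ℂ) * (La j k : ℂ)) • X (Sum.inr k, 1)) * th2 * th1 := by
    rw [psiM, del1_del2_Sc, YB, ss_X_inr]
  have h21 : delM th2 Lb Rb (delM th1 La Ra (psiM i))
      = Sc (Complex.I • ∑ j, ∑ k, ((Ra i j : ℂ) * (Lb j k : ℂ)) • X (Sum.inr k, 1)) * th1 * th2 := by
    rw [psiM, del2_del1_Sc, YB, ss_X_inr]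
  rw [h12, h21, dM_psiM] at E'
  have E01 := Matrix.ext_iff.mpr E' 0 1
  rw [Matrix.sub_apply, entry1, entry2] at E01
  by_cases hp : p
  · simp only [hp, if_true] at E01 ⊢
    rw [entry3] at E01
    have EC := congrArg (MvPolynomial.lcoeff ℂ (Finsupp.single ((Sum.inr k0 : Fin n ⊕ Fin n), (1:ℕ)) (1:ℕ))) E01
    simp only [map_neg, map_sub, map_smul, map_sum, lcoeff_apply, coeff_X', smul_eq_mul,
      Finset.mul_sum, Finsupp.single_left_inj (one_ne_zero (α := ℕ)), Prod.mk.injEq, Sum.inr.injEq,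
      mul_ite, mul_zero, mul_one, and_true, Finset.sum_ite_eq', Finset.mem_univ, if_true] at EC
    rw [← Finset.mul_sum, ← Finset.mul_sum] at EC
    rw [Matrix.add_apply, Matrix.mul_apply, Matrix.mul_apply, Matrix.smul_apply, Matrix.one_apply]
    have key : ((∑ j, Ra i j * Lb j k0) + (∑ j, Rb i j * La j k0) : ℝ) = if i = k0 then -2 else 0 := by
      have hC : (((∑ j, Ra i j * Lb j k0) + (∑ j, Rb i j * La j k0) : ℝ) : ℂ)
          = if i = k0 then -2 else 0 := by
        push_cast
        by_cases hik : i = k0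
        · subst hik
          simp only [if_true] at EC ⊢
          linear_combination Complex.I * EC +
            ((∑ j, (Ra i j : ℂ) * (Lb j i : ℂ)) + (∑ j, (Rb i j : ℂ) * (La j i : ℂ)) + 2) *
              Complex.I_mul_I
        · simp only [hik, if_false] at EC ⊢
          linear_combination Complex.I * EC +
            ((∑ j, (Ra i j : ℂ) * (Lb j k0 : ℂ)) + (∑ j, (Rb i j : ℂ) * (La j k0 : ℂ))) *
              Complex.I_mul_I
      by_cases hik : i = k0
      · simp only [hik, if_true] at hC ⊢; exact_mod_cast hC
      · simp only [hik, if_false] at hC ⊢; exact_mod_cast hC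
    rw [key]
    by_cases hik : i = k0 <;> simp [hik]
  · simp only [hp, if_false, Matrix.zero_apply] at E01 ⊢
    have EC := congrArg (MvPolynomial.lcoeff ℂ (Finsupp.single ((Sum.inr k0 : Fin n ⊕ Fin n), (1:ℕ)) (1:ℕ))) E01
    simp only [map_neg, map_sub, map_smul, map_sum, lcoeff_apply, coeff_X', smul_eq_mul,
      Finset.mul_sum, Finsupp.single_left_inj (one_ne_zero (α := ℕ)), Prod.mk.injEq, Sum.inr.injEq,
      mul_ite, mul_zero, mul_one, and_true, Finset.sum_ite_eq', Finset.mem_univ, if_true,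
      map_zero] at EC
    rw [← Finset.mul_sum, ← Finset.mul_sum] at EC
    rw [Matrix.add_apply, Matrix.mul_apply, Matrix.mul_apply]
    have hC : (((∑ j, Ra i j * Lb j k0) + (∑ j, Rb i j * La j k0) : ℝ) : ℂ) = 0 := by
      push_cast
      linear_combination Complex.I * EC +
        ((∑ j, (Ra i j : ℂ) * (Lb j k0 : ℂ)) + (∑ j, (Rb i j : ℂ) * (La j k0 : ℂ))) *
          Complex.I_mul_I
    exact_mod_cast hC

end GR
end Extract2

section Main
namespace GR
variable {n : ℕ}

lemma matC (P Q : Matrix (Fin n) (Fin n) ℝ) {p : Prop} [Decidable p]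
    (h : P + Q = if p then -(2:ℝ) • (1 : Matrix (Fin n) (Fin n) ℝ) else 0) (i k : Fin n) :
    ((P i k : ℂ)) + ((Q i k : ℂ)) = if p then (if i = k then -2 else 0) else 0 := by
  have h2 := Matrix.ext_iff.mpr h i k
  rw [Matrix.add_apply] at h2
  by_cases hp : p
  · simp only [hp, if_true, Matrix.smul_apply, Matrix.one_apply, smul_eq_mul, mul_ite,
      mul_one, mul_zero] at h2 ⊢
    by_cases hik : i = k <;> simp only [hik, if_true, if_false] at h2 ⊢ <;> exact_mod_cast h2
  · simp only [hp, if_false, Matrix.zero_apply] at h2 ⊢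
    exact_mod_cast h2

end GR
end Main


/- STATEMENT 5 (Gates–Rana): N transformations δ_A φ_i = -i ε (L_A)_iĵ ψ_ĵ,
δ_A ψ_î = -ε (R_A)_îj φ̇_j satisfy the N-extended supersymmetry algebra
[δ^{ε₁}_A, δ^{ε₂}_B] = 2i ε₁ ε₂ δ_{AB} ∂_t on φ and ψ, identically on arbitrary
fields, iff L_A R_B + L_B R_A = -2δ_{AB}𝟙 and R_A L_B + R_B L_A = -2δ_{AB}𝟙. -/
theorem gates_rana_susy_matrices
    (n N : ℕ) (L R : Fin N → Matrix (Fin n) (Fin n) ℝ) :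
    (∀ (A : Type) (_ : Ring A) (_ : Algebra ℂ A)
        (d : A →ₗ[ℂ] A)                        -- the time derivative ∂_t
        (δ1 δ2 : Fin N → A →ₗ[ℂ] A)            -- δ_A with parameters ε₁ resp. ε₂
        (ε1 ε2 : A) (φ ψ : Fin n → A),
      -- the odd parameters anticommute
      ε1 * ε2 = -(ε2 * ε1) →
      -- action on the basic fields
      (∀ a i, δ1 a (φ i) = -(Complex.I • (ε1 * ∑ j, (L a i j : ℂ) • ψ j))) →
      (∀ a i, δ1 a (ψ i) = -(ε1 * ∑ j, (R a i j : ℂ) • d (φ j))) →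
      (∀ a i, δ2 a (φ i) = -(Complex.I • (ε2 * ∑ j, (L a i j : ℂ) • ψ j))) →
      (∀ a i, δ2 a (ψ i) = -(ε2 * ∑ j, (R a i j : ℂ) • d (φ j))) →
      -- δ's are even derivations annihilating the parameters
      (∀ a x, δ1 a (ε2 * x) = ε2 * δ1 a x) →
      (∀ a x, δ2 a (ε1 * x) = ε1 * δ2 a x) →
      -- δ's commute with ∂_t, and ∂_t annihilates the parameters
      (∀ a x, δ1 a (d x) = d (δ1 a x)) →
      (∀ a x, δ2 a (d x) = d (δ2 a x)) →
      (∀ x, d (ε1 * x) = ε1 * d x) →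
      (∀ x, d (ε2 * x) = ε2 * d x) →
      -- then the N-extended supersymmetry algebra holds on φ and ψ
      (∀ a b : Fin N,
        (∀ i, δ1 a (δ2 b (φ i)) - δ2 b (δ1 a (φ i))
            = if a = b then (2 * Complex.I) • (ε1 * ε2 * d (φ i)) else 0) ∧
        (∀ i, δ1 a (δ2 b (ψ i)) - δ2 b (δ1 a (ψ i))
            = if a = b then (2 * Complex.I) • (ε1 * ε2 * d (ψ i)) else 0)))
    ↔
    (∀ a b : Fin N,
      (L a * R b + L b * R a
        = if a = b then -(2 : ℝ) • (1 : Matrix (Fin n) (Fin n) ℝ) else 0) ∧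
      (R a * L b + R b * L a
        = if a = b then -(2 : ℝ) • (1 : Matrix (Fin n) (Fin n) ℝ) else 0)) := by
  constructor
  · intro h a b
    have key := h (GR.Mat n) inferInstance inferInstance GR.dM
      (fun a => GR.delM GR.th1 (L a) (R a)) (fun a => GR.delM GR.th2 (L a) (R a))
      GR.th1 GR.th2 GR.phiM GR.psiM
      GR.th_anticomm
      (fun a i => GR.model_phi GR.th1 (L a) (R a) i)
      (fun a i => GR.model_psi GR.th1 (L a) (R a) i)
      (fun a i => GR.model_phi GR.th2 (L a) (R a) i)
      (fun a i => GR.model_psi GR.th2 (L a) (R a) i)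
      (fun a x => GR.model_del1_eps2 (L a) (R a) x)
      (fun a x => GR.model_del2_eps1 (L a) (R a) x)
      (fun a x => GR.model_del1_d (L a) (R a) x)
      (fun a x => GR.model_del2_d (L a) (R a) x)
      GR.model_d_eps1 GR.model_d_eps2
    obtain ⟨E1, E2⟩ := key a b
    exact ⟨GR.extract_phi (L a) (R a) (L b) (R b) E1,
           GR.extract_psi (L a) (R a) (L b) (R b) E2⟩
  · intro hmat A _ _ d δ1 δ2 ε1 ε2 φ ψ hεε h1φ h1ψ h2φ h2ψ h1e2 h2e1 h1d h2d hde1 hde2 a b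
    obtain ⟨hLR, hRL⟩ := hmat a b
    constructor
    · intro i
      have A1 : δ1 a (δ2 b (φ i))
          = Complex.I • (ε2 * (ε1 * ∑ k, (∑ j, (L b i j : ℂ) * (R a j k : ℂ)) • d (φ k))) := by
        rw [h2φ b i]
        exact GR.stage (δ1 a) ε2 ε1 _ _ ψ (fun k => d (φ k)) (fun j => h1ψ a j) (h1e2 a)
      have A2 : δ2 b (δ1 a (φ i))
          = Complex.I • (ε1 * (ε2 * ∑ k, (∑ j, (L a i j : ℂ) * (R b j k : ℂ)) • d (φ k))) := by
        rw [h1φ a i]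
        exact GR.stage (δ2 b) ε1 ε2 _ _ ψ (fun j => d (φ j)) (fun j => h2ψ b j) (h2e1 b)
      rw [A1, A2]
      refine GR.combine ε1 ε2 hεε _ _ _ i (fun k => ?_)
      have h2 := GR.matC _ _ hLR i k
      rw [show ((L a * R b) i k) = ∑ j, L a i j * R b j k from Matrix.mul_apply,
          show ((L b * R a) i k) = ∑ j, L b i j * R a j k from Matrix.mul_apply] at h2
      push_cast at h2
      linear_combination h2
    · intro i
      have hu1 : ∀ j, δ1 a (d (φ j)) = -(Complex.I • (ε1 * ∑ k, (L a j k : ℂ) • d (ψ k))) := by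
        intro j
        rw [h1d, h1φ, map_neg, map_smul, hde1, map_sum]
        simp only [map_smul]
      have hu2 : ∀ j, δ2 b (d (φ j)) = -(Complex.I • (ε2 * ∑ k, (L b j k : ℂ) • d (ψ k))) := by
        intro j
        rw [h2d, h2φ, map_neg, map_smul, hde2, map_sum]
        simp only [map_smul]
      have A1 : δ1 a (δ2 b (ψ i))
          = Complex.I • (ε2 * (ε1 * ∑ k, (∑ j, (R b i j : ℂ) * (L a j k : ℂ)) • d (ψ k))) := by
        rw [h2ψ b i]
        exact GR.stage' (δ1 a) ε2 ε1 _ _ (fun j => d (φ j)) (fun k => d (ψ k)) hu1 (h1e2 a)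
      have A2 : δ2 b (δ1 a (ψ i))
          = Complex.I • (ε1 * (ε2 * ∑ k, (∑ j, (R a i j : ℂ) * (L b j k : ℂ)) • d (ψ k))) := by
        rw [h1ψ a i]
        exact GR.stage' (δ2 b) ε1 ε2 _ _ (fun j => d (φ j)) (fun k => d (ψ k)) hu2 (h2e1 b)
      rw [A1, A2]
      refine GR.combine ε1 ε2 hεε _ _ _ i (fun k => ?_)
      have h2 := GR.matC _ _ hRL i k
      rw [show ((R a * L b) i k) = ∑ j, R a i j * L b j k from Matrix.mul_apply,
          show ((R b * L a) i k) = ∑ j, R b i j * L a j k from Matrix.mul_apply] at h2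
      push_cast at h2
      linear_combination h2
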